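/- arXiv:1811.08888 — 2 statements merged into one kernel-verified Lean document; each statement's English description precedes it below -/
import Mathlib

section
/- Let Z_1, Z_2 be jointly Gaussian random variables with mean 0, variance 1 each. Then E[max(Z_1,0) · max(Z_2,0)] ≥ (1/2) E[Z_1 Z_2]. -/
open MeasureTheory ProbabilityTheory Real

open NNReal in
private lemma gauss_sq_integrable' : Integrable (fun x : ℝ => x ^ 2) (gaussianReal 0 1) := by
  rw [gaussianReal_of_var_ne_zero 0 one_ne_zero,
    integrable_withDensity_iff (measurable_gaussianPDF 0 1)
      (ae_of_all _ fun x => ENNReal.ofReal_lt_top)]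
  have heq : (fun x : ℝ => x ^ 2 * (gaussianPDF 0 1 x).toReal)
      = fun x : ℝ => (Real.sqrt (2 * π * ((1:ℝ≥0):ℝ)))⁻¹ * (x ^ (2:ℝ) * rexp (-(1/2) * x ^ 2)) := by
    funext x
    rw [gaussianPDF, ENNReal.toReal_ofReal (gaussianPDFReal_nonneg _ _ _), gaussianPDFReal]
    rw [show ((2:ℝ)) = ((2:ℕ):ℝ) by norm_num, Real.rpow_natCast]
    push_cast
    ring_nf
  rw [heq]
  exact (integrable_rpow_mul_exp_neg_mul_sq (by norm_num) (by norm_num : (-1:ℝ) < 2)).const_mul _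

private lemma memLp_two_of_law' {Ω : Type*} [MeasurableSpace Ω] (μ : Measure Ω)
    (X : Ω → ℝ) (hXm : Measurable X) (hX : Measure.map X μ = gaussianReal 0 1) :
    MemLp X 2 μ := by
  rw [memLp_two_iff_integrable_sq hXm.aestronglyMeasurable]
  exact (integrable_map_measure (f := X) (g := fun x : ℝ => x ^ 2)
    (by rw [hX]; exact (measurable_id.pow_const 2).aestronglyMeasurable)
    hXm.aemeasurable).mp (by rw [hX]; exact gauss_sq_integrable')

private lemma ptwise' (x y : ℝ) :
    max x 0 * max y 0 + max (-x) 0 * max (-y) 0 - x * y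
      = max x 0 * max (-y) 0 + max (-x) 0 * max y 0 := by
  rcases le_total 0 x with hx | hx <;> rcases le_total 0 y with hy | hy <;>
    simp [max_eq_left, max_eq_right, hx, hy, neg_nonneg.mpr, neg_nonpos.mpr] <;> nlinarith

private lemma neg_law' {Ω : Type*} [MeasurableSpace Ω] (μ : Measure Ω)
    (X : Ω → ℝ) (hXm : Measurable X) (hX : Measure.map X μ = gaussianReal 0 1) :
    Measure.map (fun ω => -X ω) μ = gaussianReal 0 1 := by
  have h2 : (fun ω => -X ω) = (fun x : ℝ => (-1 : ℝ) * x) ∘ X := by funext ω; simp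
  rw [h2, ← Measure.map_map (by fun_prop) hXm, hX, gaussianReal_map_const_mul]
  norm_num

private lemma sym_integral' {Ω : Type*} [MeasurableSpace Ω] (μ : Measure Ω)
    [IsProbabilityMeasure μ]
    (Z W : Ω → ℝ) (hZ : Measure.map Z μ = gaussianReal 0 1)
    (hW : Measure.map W μ = gaussianReal 0 1)
    (hZm : Measurable Z) (hWm : Measurable W)
    (hindep : IndepFun Z W μ) (F : ℝ × ℝ → ℝ) (hF : Continuous F) :
    ∫ ω, F (Z ω, W ω) ∂μ = ∫ ω, F (-Z ω, -W ω) ∂μ := by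
  have h1 : Measure.map (fun ω => (Z ω, W ω)) μ
      = (gaussianReal 0 1).prod (gaussianReal 0 1) := by
    rw [(indepFun_iff_map_prod_eq_prod_map_map hZm.aemeasurable hWm.aemeasurable).mp hindep,
      hZ, hW]
  have h2 : Measure.map (fun ω => (-Z ω, -W ω)) μ
      = (gaussianReal 0 1).prod (gaussianReal 0 1) := by
    have hi : IndepFun (fun ω => -Z ω) (fun ω => -W ω) μ :=
      hindep.comp measurable_neg measurable_neg
    rw [(indepFun_iff_map_prod_eq_prod_map_map (by fun_prop : Measurable (fun ω => -Z ω)).aemeasurable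
        (by fun_prop : Measurable (fun ω => -W ω)).aemeasurable).mp hi, neg_law' μ Z hZm hZ, neg_law' μ W hWm hW]
  calc ∫ ω, F (Z ω, W ω) ∂μ
      = ∫ p, F p ∂((gaussianReal 0 1).prod (gaussianReal 0 1)) := by
        rw [← h1, integral_map (hZm.prodMk hWm).aemeasurable hF.aestronglyMeasurable]
    _ = ∫ ω, F (-Z ω, -W ω) ∂μ := by
        rw [← h2, integral_map ((by fun_prop : Measurable (fun ω => -Z ω)).prodMk (by fun_prop : Measurable (fun ω => -W ω))).aemeasurable hF.aestronglyMeasurable]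

private lemma ennreal_halves : (1:ENNReal)/1 = 1/2 + 1/2 := by
  rw [ENNReal.div_add_div_same, one_add_one_eq_two, one_div_one]
  exact (ENNReal.div_self (a := 2) (by norm_num) (by norm_num)).symm

private lemma int_mul' {Ω : Type*} [MeasurableSpace Ω] {μ : Measure Ω} [IsFiniteMeasure μ]
    {f g : Ω → ℝ} (hf : MemLp f 2 μ) (hg : MemLp g 2 μ) :
    Integrable (fun ω => f ω * g ω) μ := by
  have h : MemLp (f • g) 1 μ := hg.smul hf
  exact h.integrable le_rfl

private lemma memLp_max' {Ω : Type*} [MeasurableSpace Ω] {μ : Measure Ω} {f : Ω → ℝ}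
    (hf : MemLp f 2 μ) (hfm : Measurable f) : MemLp (fun ω => max (f ω) 0) 2 μ := by
  refine hf.norm.mono' (hfm.max measurable_const).aestronglyMeasurable ?_
  filter_upwards with ω
  rw [Real.norm_eq_abs, abs_of_nonneg (le_max_right _ _), Real.norm_eq_abs]
  exact max_le (le_abs_self _) (abs_nonneg _)

/-- A centered bivariate Gaussian vector with unit variances and correlation `α` is
represented as `Z₁ = Z`, `Z₂ = α Z + √(1-α²) W` with `Z, W` independent standard Gaussians. -/
theorem stmt_2 {Ω : Type*} [MeasurableSpace Ω] (μ : Measure Ω) [IsProbabilityMeasure μ]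
    (Z W : Ω → ℝ) (hZ : Measure.map Z μ = gaussianReal 0 1)
    (hW : Measure.map W μ = gaussianReal 0 1)
    (hZm : Measurable Z) (hWm : Measurable W)
    (hindep : IndepFun Z W μ)
    (α : ℝ) (hα : α ∈ Set.Icc (-1 : ℝ) 1)
    (Z₁ Z₂ : Ω → ℝ) (hZ₁ : Z₁ = Z)
    (hZ₂ : Z₂ = fun ω => α * Z ω + Real.sqrt (1 - α ^ 2) * W ω) :
    ∫ ω, max (Z₁ ω) 0 * max (Z₂ ω) 0 ∂μ ≥ (1 / 2) * ∫ ω, Z₁ ω * Z₂ ω ∂μ := by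
  set β := Real.sqrt (1 - α ^ 2) with hβ
  set Y : Ω → ℝ := fun ω => α * Z ω + β * W ω with hY
  have hYm : Measurable Y := by fun_prop
  simp only [hZ₁, hZ₂, ← hY]
  -- MemLp facts
  have hZ2 : MemLp Z 2 μ := memLp_two_of_law' μ Z hZm hZ
  have hW2 : MemLp W 2 μ := memLp_two_of_law' μ W hWm hW
  have hY2 : MemLp Y 2 μ := (hZ2.const_mul α).add (hW2.const_mul β)
  have hZn2 : MemLp (fun ω => -Z ω) 2 μ := by exact hZ2.neg
  have hYn2 : MemLp (fun ω => -Y ω) 2 μ := by exact hY2.neg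
  -- Integrability
  have i1 : Integrable (fun ω => max (Z ω) 0 * max (Y ω) 0) μ :=
    int_mul' (memLp_max' hZ2 hZm) (memLp_max' hY2 hYm)
  have i2 : Integrable (fun ω => max (-Z ω) 0 * max (-Y ω) 0) μ :=
    int_mul' (memLp_max' hZn2 hZm.neg) (memLp_max' hYn2 hYm.neg)
  have i3 : Integrable (fun ω => Z ω * Y ω) μ := int_mul' hZ2 hY2
  -- Symmetry
  have hsym : ∫ ω, max (Z ω) 0 * max (Y ω) 0 ∂μ
      = ∫ ω, max (-Z ω) 0 * max (-Y ω) 0 ∂μ := by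
    have hF : Continuous (fun p : ℝ × ℝ => max p.1 0 * max (α * p.1 + β * p.2) 0) := by
      fun_prop
    have h := sym_integral' μ Z W hZ hW hZm hWm hindep _ hF
    rw [show (fun ω => max (Z ω) 0 * max (Y ω) 0)
        = fun ω => max (Z ω) 0 * max (α * Z ω + β * W ω) 0 from rfl, h]
    refine integral_congr_ae (ae_of_all _ fun ω => ?_)
    have : α * -Z ω + β * -W ω = -(α * Z ω + β * W ω) := by ring
    simp only [this]
    rfl
  -- Positivity
  have hnn : 0 ≤ ∫ ω, (max (Z ω) 0 * max (Y ω) 0 + max (-Z ω) 0 * max (-Y ω) 0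
      - Z ω * Y ω) ∂μ := by
    refine integral_nonneg fun ω => ?_
    rw [ptwise']
    have h1 : (0:ℝ) ≤ max (Z ω) 0 := le_max_right _ _
    have h2 : (0:ℝ) ≤ max (-Z ω) 0 := le_max_right _ _
    have h3 : (0:ℝ) ≤ max (Y ω) 0 := le_max_right _ _
    have h4 : (0:ℝ) ≤ max (-Y ω) 0 := le_max_right _ _
    exact add_nonneg (mul_nonneg h1 h4) (mul_nonneg h2 h3)
  have i12 : Integrable (fun ω => max (Z ω) 0 * max (Y ω) 0
      + max (-Z ω) 0 * max (-Y ω) 0) μ := i1.add i2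
  rw [integral_sub i12 i3] at hnn
  rw [integral_add i1 i2] at hnn
  rw [ge_iff_le]
  linarith
end

section
/- Let ℓ: ℝ → ℝ satisfy ℓ(x) > 0 for all x and suppose there exist α_0, α_1 > 0 and p ∈ (0,1] with -ℓ'(x) ≥ min(α_0, α_1 ℓ(x)^p) for all x. Then for any x_1,…,x_n ∈ ℝ, -∑_{i=1}^n ℓ'(x_i) ≥ min(α_0, α_1 n^p · ((1/n)∑_{i=1}^n ℓ(x_i))^p). -/
open Real Finset

lemma real_rpow_add_le {p : ℝ} (hp0 : 0 < p) (hp1 : p ≤ 1) {a b : ℝ}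
    (ha : 0 ≤ a) (hb : 0 ≤ b) : (a + b) ^ p ≤ a ^ p + b ^ p := by
  have h := NNReal.rpow_add_le_add_rpow (⟨a, ha⟩ : NNReal) (⟨b, hb⟩ : NNReal) hp0.le hp1
  have h2 := NNReal.coe_le_coe.2 h
  exact h2

lemma sum_rpow_ge {ι : Type*} (s : Finset ι) (f : ι → ℝ) {p : ℝ}
    (hp0 : 0 < p) (hp1 : p ≤ 1) (hf : ∀ i ∈ s, 0 ≤ f i) :
    (∑ i ∈ s, f i) ^ p ≤ ∑ i ∈ s, f i ^ p := by
  classical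
  induction s using Finset.induction with
  | empty => simp [Real.zero_rpow hp0.ne']
  | insert a s hnot ih =>
    rw [Finset.sum_insert hnot, Finset.sum_insert hnot]
    have ha : 0 ≤ f a := hf a (Finset.mem_insert_self a s)
    have hs : 0 ≤ ∑ i ∈ s, f i :=
      Finset.sum_nonneg fun i hi => hf i (Finset.mem_insert_of_mem hi)
    calc (f a + ∑ i ∈ s, f i) ^ p ≤ f a ^ p + (∑ i ∈ s, f i) ^ p :=
          real_rpow_add_le hp0 hp1 ha hs
      _ ≤ f a ^ p + ∑ i ∈ s, f i ^ p := by
          gcongr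
          exact ih fun i hi => hf i (Finset.mem_insert_of_mem hi)

theorem stmt_7 (ℓ ℓ' : ℝ → ℝ) (hd : ∀ x, HasDerivAt ℓ (ℓ' x) x)
    (hpos : ∀ x, 0 < ℓ x) (α₀ α₁ p : ℝ) (hα₀ : 0 < α₀) (hα₁ : 0 < α₁)
    (hp0 : 0 < p) (hp1 : p ≤ 1)
    (hderiv : ∀ x, -ℓ' x ≥ min α₀ (α₁ * ℓ x ^ p))
    (n : ℕ) (hn : 1 ≤ n) (x : Fin n → ℝ) :
    -∑ i, ℓ' (x i) ≥ min α₀ (α₁ * (n : ℝ) ^ p * ((1 / n : ℝ) * ∑ i, ℓ (x i)) ^ p) := by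
  have hn0 : (0 : ℝ) < n := by exact_mod_cast hn
  have hnp : (0 : ℝ) < (n : ℝ) ^ p := Real.rpow_pos_of_pos hn0 p
  have hSnn : 0 ≤ ∑ i, ℓ (x i) := Finset.sum_nonneg fun i _ => (hpos _).le
  have hsum : ∑ i, min α₀ (α₁ * ℓ (x i) ^ p) ≤ -∑ i, ℓ' (x i) := by
    rw [← Finset.sum_neg_distrib]
    exact Finset.sum_le_sum fun i _ => hderiv (x i)
  have hR : α₁ * (n : ℝ) ^ p * ((1 / n : ℝ) * ∑ i, ℓ (x i)) ^ p
      = α₁ * (∑ i, ℓ (x i)) ^ p := by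
    rw [one_div, Real.mul_rpow (by positivity) hSnn, Real.inv_rpow hn0.le]
    field_simp
  rw [hR]
  by_cases h : ∃ i, α₀ ≤ α₁ * ℓ (x i) ^ p
  · obtain ⟨i, hi⟩ := h
    refine le_trans (min_le_left _ _) (le_trans ?_ hsum)
    have h2 := Finset.single_le_sum (f := fun j => min α₀ (α₁ * ℓ (x j) ^ p))
      (fun j _ => le_min hα₀.le (mul_pos hα₁ (Real.rpow_pos_of_pos (hpos _) p)).le)
      (Finset.mem_univ i)
    simpa [min_eq_left hi] using h2
  · push_neg at h
    refine le_trans (min_le_right _ _) (le_trans ?_ hsum)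
    have heq : ∑ i, min α₀ (α₁ * ℓ (x i) ^ p) = α₁ * ∑ i, ℓ (x i) ^ p := by
      rw [Finset.mul_sum]
      exact Finset.sum_congr rfl fun i _ => min_eq_right (h i).le
    rw [heq]
    have := sum_rpow_ge Finset.univ (fun i => ℓ (x i)) hp0 hp1 (fun i _ => (hpos _).le)
    nlinarith
end
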